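/- arXiv:2410.07090 — 2 statements merged into one kernel-verified Lean document; each statement's English description precedes it below -/
import Mathlib

section
/- Let g : D² → ℂ be continuous on the closed unit disc, holomorphic on the open disc, with |g(z)| = 1 for all z ∈ ∂D², and suppose the winding number of g restricted to ∂D² around the origin is 0. Then g is constant (equal to some z₀ with |z₀| = 1). -/
/-!
Each zero `w` of `g` in the disc, of order `m`, can be divided out by the Blaschke factor
`((z - w) / (1 - w̄ z)) ^ m`, leaving a function of the same kind with one zero fewer. The Blaschke
factor has modulus one on the circle and its argument increases by `2π m` along it, so the argument
of `g` increases along the circle by at least `2π` times the number of its zeros. With winding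
number zero, `g` therefore has no zeros, and the maximum modulus principle applied to `g` and
`1 / g` forces `|g| = 1` on the whole disc, so `g` is constant.
-/

open Metric Complex Topology Filter Set ComplexConjugate
open scoped Real

/-- Away from `w`, `q` is `f / (· - w) ^ m`; it inherits the regularity of `f` on any set. -/
lemma AnalyticAt.exists_eq_pow_mul_of_analyticOrderAt_eq {𝕜 : Type*} [NontriviallyNormedField 𝕜]
    {f : 𝕜 → 𝕜} {w : 𝕜} {m : ℕ} (hf : AnalyticAt 𝕜 f w) (hm : analyticOrderAt f w = m) :
    ∃ q : 𝕜 → 𝕜, q w ≠ 0 ∧ (∀ z, f z = (z - w) ^ m * q z) ∧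
      (∀ s, ContinuousOn f s → ContinuousOn q s) ∧
      ∀ s, DifferentiableOn 𝕜 f s → DifferentiableOn 𝕜 q s := by
  classical
  obtain ⟨q₀, hq₀, hq₀w, hfq₀⟩ := hf.analyticOrderAt_eq_natCast.mp hm
  set q := Function.update (fun z => f z / (z - w) ^ m) w (q₀ w)
  have hq_near_w : q =ᶠ[𝓝 w] q₀ := by
    filter_upwards [hfq₀] with z hz
    rcases eq_or_ne z w with rfl | hzw
    · simp [q]
    · rw [show q z = _ from Function.update_of_ne hzw _ _, hz, smul_eq_mul]
      field_simp [sub_ne_zero.mpr hzw]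
  have hq_off_w {z : 𝕜} (hzw : z ≠ w) : q =ᶠ[𝓝 z] fun x => f x / (x - w) ^ m :=
    (isOpen_ne.eventually_mem hzw).mono fun x hx => Function.update_of_ne hx _ _
  have hqA : AnalyticAt 𝕜 q w := hq₀.congr hq_near_w.symm
  have hden {z : 𝕜} (hzw : z ≠ w) : (z - w) ^ m ≠ 0 := pow_ne_zero _ (sub_ne_zero.mpr hzw)
  refine ⟨q, by simpa [q] using hq₀w, fun z => ?_, fun s hs z hz => ?_, fun s hs z hz => ?_⟩
  · rcases eq_or_ne z w with rfl | hzw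
    · simpa [q] using hfq₀.self_of_nhds
    · simp only [q, Function.update_of_ne hzw]
      field_simp [hden hzw]
  · rcases eq_or_ne z w with rfl | hzw
    · exact hqA.continuousAt.continuousWithinAt
    · exact ((hs z hz).div (by fun_prop) (hden hzw)).congr_of_eventuallyEq
        ((hq_off_w hzw).filter_mono nhdsWithin_le_nhds) (hq_off_w hzw).self_of_nhds
  · rcases eq_or_ne z w with rfl | hzw
    · exact hqA.differentiableAt.differentiableWithinAt
    · exact ((hs z hz).div (by fun_prop) (hden hzw)).congr_of_eventuallyEq
        ((hq_off_w hzw).filter_mono nhdsWithin_le_nhds) (hq_off_w hzw).self_of_nhds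

lemma sub_eq_sub_of_exp_mul_I_eq {p q : ℝ → ℝ} (hp : Continuous p) (hq : Continuous q)
    (h : ∀ θ, exp (p θ * I) = exp (q θ * I)) (x y : ℝ) : p x - q x = p y - q y := by
  have hdiscrete : IsDiscrete (AddSubgroup.zmultiples (2 * π) : Set ℝ) :=
    isDiscrete_iff_discreteTopology.mpr
      (inferInstanceAs (DiscreteTopology (AddSubgroup.zmultiples (2 * π))))
  have hmaps : MapsTo (p - q) univ (AddSubgroup.zmultiples (2 * π)) := by
    intro θ _
    obtain ⟨n, hn⟩ := exp_eq_exp_iff_exists_int.mp (h θ)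
    refine AddSubgroup.mem_zmultiples_iff.mpr ⟨n, ?_⟩
    have : ((n • (2 * π) : ℝ) : ℂ) * I = ((p θ - q θ : ℝ) : ℂ) * I := by
      push_cast
      linear_combination -hn
    exact_mod_cast mul_right_cancel₀ I_ne_zero this
  exact isPreconnected_univ.constant_of_mapsTo hdiscrete (hp.sub hq).continuousOn hmaps
    trivial trivial

lemma DiffContOnCl.norm_le_of_forall_mem_sphere_norm_le {E : Type*} [NormedAddCommGroup E]
    [NormedSpace ℂ E] {f : ℂ → E} {c : ℂ} {r C : ℝ} (hr : r ≠ 0) (hf : DiffContOnCl ℂ f (ball c r))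
    (hC : ∀ z ∈ sphere c r, ‖f z‖ ≤ C) {z : ℂ} (hz : z ∈ closedBall c r) : ‖f z‖ ≤ C :=
  Complex.norm_le_of_forall_mem_frontier_norm_le isBounded_ball hf
    (by rwa [frontier_ball c hr]) (by rwa [closure_ball c hr])

lemma one_sub_conj_mul_ne_zero {w z : ℂ} (hw : ‖w‖ < 1) (hz : ‖z‖ ≤ 1) : 1 - conj w * z ≠ 0 := by
  rw [sub_ne_zero]
  intro h
  have : ‖conj w * z‖ < 1 := by
    rw [norm_mul, norm_conj]
    nlinarith [norm_nonneg w, norm_nonneg z]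
  rw [← h, norm_one] at this
  exact lt_irrefl _ this

lemma norm_one_sub_conj_mul {w z : ℂ} (hz : ‖z‖ = 1) : ‖1 - conj w * z‖ = ‖z - w‖ := by
  have hzz : z * conj z = 1 := by rw [mul_conj', hz]; norm_num
  calc ‖1 - conj w * z‖ = ‖z * conj (z - w)‖ := by
        congr 1; rw [map_sub]; linear_combination -hzz
    _ = ‖z - w‖ := by rw [norm_mul, hz, one_mul, norm_conj]

noncomputable def blaschke (w z : ℂ) : ℂ := (z - w) / (1 - conj w * z)

lemma norm_blaschke {w z : ℂ} (hw : ‖w‖ < 1) (hz : ‖z‖ = 1) : ‖blaschke w z‖ = 1 := by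
  have hzw : z - w ≠ 0 := sub_ne_zero.mpr (by rintro rfl; linarith)
  rw [blaschke, norm_div, norm_one_sub_conj_mul hz, div_self (norm_ne_zero_iff.mpr hzw)]

/-- A continuous argument of `θ ↦ blaschke w (e^{iθ})`: on the circle `z - w = z * conj u` with
`u = 1 - w̄ z`, and `u` stays in the right half plane, where `arg` is continuous. -/
noncomputable def blaschkeArg (w : ℂ) (θ : ℝ) : ℝ := θ - 2 * arg (1 - conj w * exp (θ * I))

lemma re_one_sub_conj_mul_exp_pos {w : ℂ} (hw : ‖w‖ < 1) (θ : ℝ) :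
    0 < (1 - conj w * exp (θ * I)).re := by
  have hlt : ‖conj w * exp (θ * I)‖ < 1 := by
    rwa [norm_mul, norm_conj, norm_exp_ofReal_mul_I, mul_one]
  have := (abs_lt.mp ((abs_re_le_norm _).trans_lt hlt)).2
  rw [sub_re, one_re]
  linarith

lemma continuous_blaschkeArg {w : ℂ} (hw : ‖w‖ < 1) : Continuous (blaschkeArg w) :=
  continuous_id.sub <| continuous_const.mul <| continuous_iff_continuousAt.mpr fun θ =>
    (continuousAt_arg (Or.inl (re_one_sub_conj_mul_exp_pos hw θ))).comp
      (f := fun θ : ℝ => 1 - conj w * exp (θ * I)) (by fun_prop)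

lemma blaschke_exp_mul_I {w : ℂ} (hw : ‖w‖ < 1) (θ : ℝ) :
    blaschke w (exp (θ * I)) = exp (blaschkeArg w θ * I) := by
  set z := exp (θ * I)
  set u := 1 - conj w * z
  have hu : u ≠ 0 := one_sub_conj_mul_ne_zero hw (norm_exp_ofReal_mul_I θ).le
  have hzz : z * conj z = 1 := by rw [mul_conj', norm_exp_ofReal_mul_I]; norm_num
  have harg : exp (arg u * I) = u / ‖u‖ := by
    rw [eq_div_iff (by simpa using hu), mul_comm, norm_mul_exp_arg_mul_I]
  calc blaschke w z = z * conj u / u := by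
        rw [blaschke]
        congr 1
        simp only [u, map_sub, map_one, map_mul, conj_conj]
        linear_combination w * hzz
    _ = z * (‖u‖ / u) ^ 2 := by
        rw [div_pow, ← mul_conj']
        field_simp
    _ = z * (exp (arg u * I))⁻¹ ^ 2 := by rw [harg, inv_div]
    _ = exp (blaschkeArg w θ * I) := by
        rw [← exp_neg, sq, ← exp_add, ← exp_add]
        congr 1
        simp only [blaschkeArg, u, z]
        push_cast
        ring

lemma blaschkeArg_two_pi (w : ℂ) : blaschkeArg w (2 * π) = blaschkeArg w 0 + 2 * π := by
  have h : exp ((2 * π : ℝ) * I) = exp ((0 : ℝ) * I) := by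
    push_cast
    rw [exp_two_pi_mul_I, zero_mul, exp_zero]
  rw [blaschkeArg, blaschkeArg, h]
  ring

lemma exp_lift_of_eq_mul_blaschke_pow {g h : ℂ → ℂ} {a : ℝ → ℝ} {w : ℂ} {m : ℕ} (hw : ‖w‖ < 1)
    (hfac : ∀ z ∈ sphere (0 : ℂ) 1, g z = h z * blaschke w z ^ m)
    (hlift : ∀ θ : ℝ, g (exp (θ * I)) = exp (a θ * I)) (θ : ℝ) :
    h (exp (θ * I)) = exp ((a θ - m * blaschkeArg w θ : ℝ) * I) := by
  have hB : blaschke w (exp (θ * I)) ^ m ≠ 0 := by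
    rw [blaschke_exp_mul_I hw]
    exact pow_ne_zero _ (exp_ne_zero _)
  apply mul_right_cancel₀ hB
  rw [← hfac _ (by simp [norm_exp_ofReal_mul_I]), hlift, blaschke_exp_mul_I hw, ← exp_nat_mul,
    ← exp_add]
  congr 1
  push_cast
  ring

structure IsBoundaryUnimodular (g : ℂ → ℂ) : Prop where
  continuousOn : ContinuousOn g (closedBall 0 1)
  differentiableOn : DifferentiableOn ℂ g (ball 0 1)
  norm_eq_one : ∀ z ∈ sphere (0 : ℂ) 1, ‖g z‖ = 1

namespace IsBoundaryUnimodular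

variable {g : ℂ → ℂ}

lemma diffContOnCl (hg : IsBoundaryUnimodular g) : DiffContOnCl ℂ g (ball 0 1) :=
  ⟨hg.differentiableOn, by rw [closure_ball 0 one_ne_zero]; exact hg.continuousOn⟩

lemma ne_zero_of_mem_sphere (hg : IsBoundaryUnimodular g) {z : ℂ} (hz : z ∈ sphere (0 : ℂ) 1) :
    g z ≠ 0 := fun h => by simpa [h] using hg.norm_eq_one z hz

lemma eqOn_closedBall_of_ne_zero (hg : IsBoundaryUnimodular g)
    (hne : ∀ z ∈ ball (0 : ℂ) 1, g z ≠ 0) :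
    EqOn g (fun _ => g 0) (closedBall 0 1) := by
  have hne' : ∀ z ∈ closedBall (0 : ℂ) 1, g z ≠ 0 := by
    intro z hz
    rcases (mem_closedBall.mp hz).lt_or_eq with hz | hz
    · exact hne z (mem_ball.mpr hz)
    · exact hg.ne_zero_of_mem_sphere (mem_sphere.mpr hz)
  have hinv : DiffContOnCl ℂ (fun z => (g z)⁻¹) (ball 0 1) :=
    ⟨hg.differentiableOn.inv hne, by
      rw [closure_ball 0 one_ne_zero]; exact hg.continuousOn.inv₀ hne'⟩
  have hnorm : ∀ z ∈ closedBall (0 : ℂ) 1, ‖g z‖ = 1 := by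
    intro z hz
    refine le_antisymm (hg.diffContOnCl.norm_le_of_forall_mem_sphere_norm_le one_ne_zero
      (fun z hz => (hg.norm_eq_one z hz).le) hz) ?_
    have := hinv.norm_le_of_forall_mem_sphere_norm_le one_ne_zero (C := 1)
      (fun z hz => by simp [hg.norm_eq_one z hz]) hz
    rwa [norm_inv, inv_le_one₀ (norm_pos_iff.mpr (hne' z hz))] at this
  have hmax : IsMaxOn (norm ∘ g) (ball 0 1) (0 : ℂ) := fun z hz => by
    simp [hnorm z (ball_subset_closedBall hz), hnorm 0 (by simp)]
  have := Complex.eqOn_closure_of_isPreconnected_of_isMaxOn_norm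
    (convex_ball (0 : ℂ) 1).isPreconnected isOpen_ball hg.diffContOnCl (by simp) hmax
  rwa [closure_ball 0 one_ne_zero] at this

lemma not_frequently_eq_zero (hg : IsBoundaryUnimodular g) {x : ℂ} (hx : x ∈ ball (0 : ℂ) 1) :
    ¬∃ᶠ z in 𝓝[≠] x, g z = 0 := by
  intro hfreq
  have hball : EqOn g 0 (ball 0 1) :=
    (hg.differentiableOn.analyticOnNhd isOpen_ball).eqOn_zero_of_preconnected_of_frequently_eq_zero
      (convex_ball (0 : ℂ) 1).isPreconnected hx hfreq
  have hclosedBall : EqOn g 0 (closedBall 0 1) :=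
    hball.of_subset_closure hg.continuousOn continuousOn_const ball_subset_closedBall
      (closure_ball 0 one_ne_zero).ge
  exact hg.ne_zero_of_mem_sphere (z := 1) (by simp) (hclosedBall (by simp))

lemma finite_zeros (hg : IsBoundaryUnimodular g) : {z ∈ ball (0 : ℂ) 1 | g z = 0}.Finite := by
  by_contra hinf
  obtain ⟨x, hx, hacc⟩ := Set.Infinite.exists_accPt_of_subset_isCompact hinf
    (isCompact_closedBall 0 1) (sep_subset _ _ |>.trans ball_subset_closedBall)
  have hzeros_closed : IsClosed {z ∈ closedBall (0 : ℂ) 1 | g z = 0} :=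
    hg.continuousOn.preimage_isClosed_of_isClosed isClosed_closedBall isClosed_singleton
  have hgx : g x = 0 := (hzeros_closed.closure_subset_iff.mpr
    (fun z hz => ⟨ball_subset_closedBall hz.1, hz.2⟩) hacc.clusterPt.mem_closure).2
  have hx_ball : x ∈ ball (0 : ℂ) 1 := by
    rcases (mem_closedBall.mp hx).lt_or_eq with hx | hx
    · exact mem_ball.mpr hx
    · exact absurd hgx (hg.ne_zero_of_mem_sphere (mem_sphere.mpr hx))
  exact hg.not_frequently_eq_zero hx_ball
    ((accPt_iff_frequently_nhdsNE.mp hacc).mono fun z hz => hz.2)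

lemma exists_eq_mul_blaschke_pow (hg : IsBoundaryUnimodular g) {w : ℂ} (hw : w ∈ ball (0 : ℂ) 1)
    (hgw : g w = 0) :
    ∃ (h : ℂ → ℂ) (m : ℕ), 0 < m ∧ IsBoundaryUnimodular h ∧
      {z ∈ ball (0 : ℂ) 1 | h z = 0} = {z ∈ ball (0 : ℂ) 1 | g z = 0} \ {w} ∧
      ∀ z ∈ sphere (0 : ℂ) 1, g z = h z * blaschke w z ^ m := by
  have hw' : ‖w‖ < 1 := mem_ball_zero_iff.mp hw
  obtain ⟨m, hm⟩ := ENat.ne_top_iff_exists.mp fun htop => hg.not_frequently_eq_zero hw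
    ((analyticOrderAt_eq_top.mp htop).filter_mono nhdsWithin_le_nhds).frequently
  obtain ⟨q, hqw, hgq, hq_cont, hq_diff⟩ :=
    (hg.differentiableOn.analyticOnNhd isOpen_ball w hw).exists_eq_pow_mul_of_analyticOrderAt_eq
      hm.symm
  have hm_pos : 0 < m :=
    Nat.pos_of_ne_zero fun hm0 => hqw (by simpa [hm0, hgw] using (hgq w).symm)
  have hden {z : ℂ} (hz : ‖z‖ ≤ 1) : (1 - conj w * z) ^ m ≠ 0 :=
    pow_ne_zero _ (one_sub_conj_mul_ne_zero hw' hz)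
  have hfac : ∀ z ∈ sphere (0 : ℂ) 1, g z = q z * (1 - conj w * z) ^ m * blaschke w z ^ m := by
    intro z hz
    rw [hgq, blaschke, div_pow, mul_assoc,
      mul_div_cancel₀ _ (hden (mem_sphere_zero_iff_norm.mp hz).le), mul_comm]
  refine ⟨fun z => q z * (1 - conj w * z) ^ m, m, hm_pos, ⟨?_, ?_, fun z hz => ?_⟩, ?_, hfac⟩
  · exact (hq_cont _ hg.continuousOn).mul (by fun_prop)
  · exact (hq_diff _ hg.differentiableOn).mul (by fun_prop)
  · have := congrArg norm (hfac z hz)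
    rwa [norm_mul, norm_pow, norm_blaschke hw' (mem_sphere_zero_iff_norm.mp hz), one_pow, mul_one,
      hg.norm_eq_one z hz, eq_comm] at this
  · ext z
    simp only [mem_sep_iff, Set.mem_sdiff, mem_singleton_iff, hgq]
    constructor
    · rintro ⟨hz, hhz⟩
      have hqz : q z = 0 := (mul_eq_zero.mp hhz).resolve_right (hden (mem_ball_zero_iff.mp hz).le)
      exact ⟨⟨hz, by simp [hqz]⟩, fun hzw => hqw (hzw ▸ hqz)⟩
    · rintro ⟨⟨hz, hgz⟩, hzw⟩
      have hqz : q z = 0 := (mul_eq_zero.mp hgz).resolve_left (pow_ne_zero _ (sub_ne_zero.mpr hzw))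
      exact ⟨hz, by simp [hqz]⟩

lemma ne_zero_of_ncard_zeros_eq_zero (hg : IsBoundaryUnimodular g)
    (h : {z ∈ ball (0 : ℂ) 1 | g z = 0}.ncard = 0) : ∀ z ∈ ball (0 : ℂ) 1, g z ≠ 0 :=
  fun _ hz hgz => ((Set.ncard_eq_zero hg.finite_zeros).mp h).subset ⟨hz, hgz⟩

lemma lift_two_pi_eq_of_ne_zero (hg : IsBoundaryUnimodular g)
    (hne : ∀ z ∈ ball (0 : ℂ) 1, g z ≠ 0) {a : ℝ → ℝ} (ha : Continuous a)
    (hlift : ∀ θ : ℝ, g (exp (θ * I)) = exp (a θ * I)) :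
    a (2 * π) = a 0 := by
  have hconst := hg.eqOn_closedBall_of_ne_zero hne
  have hmem (θ : ℝ) : exp (θ * I) ∈ closedBall (0 : ℂ) 1 := by simp [norm_exp_ofReal_mul_I]
  have := sub_eq_sub_of_exp_mul_I_eq ha (continuous_const (y := a 0))
    (fun θ => by rw [← hlift, ← hlift, hconst (hmem θ), hconst (hmem 0)]) (2 * π) 0
  linarith

lemma two_pi_mul_ncard_zeros_le (hg : IsBoundaryUnimodular g) {a : ℝ → ℝ} (ha : Continuous a)
    (hlift : ∀ θ : ℝ, g (exp (θ * I)) = exp (a θ * I)) :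
    2 * π * {z ∈ ball (0 : ℂ) 1 | g z = 0}.ncard ≤ a (2 * π) - a 0 := by
  induction hn : {z ∈ ball (0 : ℂ) 1 | g z = 0}.ncard generalizing g a with
  | zero =>
    simp [hg.lift_two_pi_eq_of_ne_zero (hg.ne_zero_of_ncard_zeros_eq_zero hn) ha hlift]
  | succ n ih =>
    obtain ⟨w, hw⟩ := Set.nonempty_of_ncard_ne_zero (hn.trans_ne n.succ_ne_zero)
    obtain ⟨h, m, hm, hh, hzeros, hfac⟩ := hg.exists_eq_mul_blaschke_pow hw.1 hw.2
    have hw' : ‖w‖ < 1 := mem_ball_zero_iff.mp hw.1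
    have hcard : {z ∈ ball (0 : ℂ) 1 | h z = 0}.ncard = n := by
      rw [hzeros, Set.ncard_sdiff_singleton_of_mem hw, hn, Nat.add_sub_cancel]
    have := ih hh (a := fun θ => a θ - m * blaschkeArg w θ)
      (ha.sub (continuous_const.mul (continuous_blaschkeArg hw')))
      (exp_lift_of_eq_mul_blaschke_pow hw' hfac hlift) hcard
    rw [blaschkeArg_two_pi] at this
    have hm' : (1 : ℝ) ≤ m := by exact_mod_cast hm
    push_cast
    nlinarith [Real.pi_pos]

end IsBoundaryUnimodular

/-- The winding number of `g` on the unit circle is encoded by a continuous lift `a` of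
`θ ↦ g (e^{iθ})`; it is `(a (2π) - a 0) / 2π`. -/
theorem constant_of_winding_zero (g : ℂ → ℂ)
    (hcont : ContinuousOn g (closedBall (0 : ℂ) 1))
    (hdiff : DifferentiableOn ℂ g (ball (0 : ℂ) 1))
    (hb : ∀ z ∈ sphere (0 : ℂ) 1, ‖g z‖ = 1)
    (a : ℝ → ℝ) (ha : Continuous a)
    (hlift : ∀ θ : ℝ, g (Complex.exp (θ * Complex.I)) = Complex.exp (a θ * Complex.I))
    (hwind : a (2 * Real.pi) = a 0) :
    ∃ z₀ : ℂ, ‖z₀‖ = 1 ∧ ∀ z ∈ closedBall (0 : ℂ) 1, g z = z₀ := by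
  have hg : IsBoundaryUnimodular g := ⟨hcont, hdiff, hb⟩
  have hcard : {z ∈ ball (0 : ℂ) 1 | g z = 0}.ncard = 0 := by
    have := hg.two_pi_mul_ncard_zeros_le ha hlift
    rw [hwind, sub_self] at this
    exact Nat.eq_zero_of_le_zero (by exact_mod_cast nonpos_of_mul_nonpos_right this (by positivity))
  have hconst := hg.eqOn_closedBall_of_ne_zero (hg.ne_zero_of_ncard_zeros_eq_zero hcard)
  refine ⟨g 0, ?_, hconst⟩
  have hg1 : g 1 = g 0 := hconst (by simp)
  exact hg1 ▸ hb 1 (by simp)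
end

section
/- Let ẇ : D² → ℂ be holomorphic on the open unit disc and continuous up to the boundary, with power series ẇ(z) = Σ_{k≥0} α_k z^k, and suppose that along the boundary it satisfies ẇ(e^{iφ}) · conj(w₀(e^{iφ})) + conj(ẇ(e^{iφ})) · w₀(e^{iφ}) = 0 for all φ, where w₀(e^{iφ}) = √r · e^{iφ} for some fixed r > 0. Then α_k = 0 for all k ≥ 3, α₀ + conj(α₂) = 0, and α₁ + conj(α₁) = 0. In particular, the real vector space of such ẇ has dimension 3, parametrized by α₀ ∈ ℂ and the imaginary part of α₁. -/
/-!
On the unit circle `z = e^{iφ}` the boundary condition, divided by `√r`, says that the absolutely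
convergent trigonometric series `∑ₖ (αₖ e^{i(k-1)φ} + conj αₖ e^{i(1-k)φ})` vanishes identically.
Integrating it termwise against `e^{-inφ}` over a period leaves `2π` times the sum of its
coefficients of frequency `n`, so these sums vanish: frequency `k - 1 ≥ 2` carries only `αₖ`,
frequency `1` carries `α₂ + conj α₀` and frequency `0` carries `α₁ + conj α₁`.
-/

open Metric Complex ComplexConjugate

theorem integral_exp_int_mul_I (m : ℤ) :
    ∫ φ in (0 : ℝ)..2 * Real.pi, exp (m * φ * I) = if m = 0 then (2 * Real.pi : ℂ) else 0 := by
  split_ifs with hm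
  · simp [hm]
  have hc : (m : ℂ) * I ≠ 0 := mul_ne_zero (Int.cast_ne_zero.mpr hm) I_ne_zero
  have hperiod : exp (m * I * (2 * Real.pi : ℝ)) = 1 := by
    simpa [mul_comm, mul_left_comm, mul_assoc] using exp_int_mul_two_pi_mul_I m
  simp_rw [mul_right_comm (m : ℂ), integral_exp_mul_complex hc, hperiod]
  simp

theorem hasSum_ite_of_hasSum_exp_eq_zero {ι : Type*} [Countable ι] {c : ι → ℂ} {e : ι → ℤ}
    (hc : Summable fun i => ‖c i‖) (h : ∀ φ : ℝ, HasSum (fun i => c i * exp (e i * φ * I)) 0)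
    (n : ℤ) : HasSum (fun i => if e i = n then c i else 0) 0 := by
  have hshift (φ : ℝ) : HasSum (fun i => c i * exp ((e i - n : ℤ) * φ * I)) 0 := by
    have hfreq : ∀ i, c i * exp ((e i - n : ℤ) * φ * I)
        = c i * exp (e i * φ * I) * exp (-n * φ * I) := fun i => by
      rw [mul_assoc (c i), ← exp_add]
      push_cast
      ring_nf
    simpa only [hfreq, zero_mul] using (h φ).mul_right (exp (-n * φ * I))
  have hint := intervalIntegral.hasSum_integral_of_dominated_convergence (a := 0)
    (b := 2 * Real.pi) (μ := MeasureTheory.volume) (bound := fun i _ => ‖c i‖)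
    (f := fun _ => (0 : ℂ))
    (fun i => (by fun_prop : Continuous _).aestronglyMeasurable)
    (fun i => Filter.Eventually.of_forall fun φ _ => by
      rw [norm_mul, ← ofReal_intCast, ← ofReal_mul, norm_exp_ofReal_mul_I, mul_one])
    (Filter.Eventually.of_forall fun _ _ => hc) intervalIntegrable_const
    (Filter.Eventually.of_forall fun φ _ => hshift φ)
  simp only [intervalIntegral.integral_const_mul, integral_exp_int_mul_I, sub_eq_zero,
    intervalIntegral.integral_zero, mul_ite, mul_zero] at hint
  have h2pi : (2 * Real.pi : ℂ) ≠ 0 := by exact_mod_cast Real.two_pi_pos.ne'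
  rw [← hasSum_mul_left_iff h2pi, mul_zero]
  simpa [mul_comm] using hint

/- On `z = e^{iφ}`, `αₖ zᵏ · conj z = αₖ e^{i(k-1)φ}` and `conj (αₖ zᵏ) · z = conj αₖ e^{i(1-k)φ}`:
the left and right summands of `ℕ ⊕ ℕ` index these two families of harmonics. -/
def boundaryFreq : ℕ ⊕ ℕ → ℤ
  | .inl k => k - 1
  | .inr k => 1 - k

def boundaryCoeff (α : ℕ → ℂ) : ℕ ⊕ ℕ → ℂ
  | .inl k => α k
  | .inr k => conj (α k)

theorem summable_norm_boundaryCoeff {α : ℕ → ℂ} (hα : Summable α) :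
    Summable fun i => ‖boundaryCoeff α i‖ :=
  have hnorm : Summable fun k => ‖α k‖ := hα.norm
  Summable.sum _ hnorm (by simpa [boundaryCoeff, Function.comp_def] using hnorm)

theorem exp_mul_I_pow_mul_conj (φ : ℝ) (k : ℕ) :
    exp (φ * I) ^ k * conj (exp (φ * I)) = exp ((k - 1 : ℤ) * φ * I) := by
  rw [← exp_conj, ← exp_nat_mul, ← exp_add]
  congr 1
  simp only [map_mul, conj_ofReal, conj_I]
  push_cast
  ring

theorem conj_exp_mul_I_pow_mul (φ : ℝ) (k : ℕ) :
    conj (exp (φ * I) ^ k) * exp (φ * I) = exp ((1 - k : ℤ) * φ * I) := by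
  rw [map_pow, ← exp_conj, ← exp_nat_mul, ← exp_add]
  congr 1
  simp only [map_mul, conj_ofReal, conj_I]
  push_cast
  ring

theorem hasSum_boundaryCoeff_mul_exp {α : ℕ → ℂ} {w : ℂ → ℂ}
    (hsum : ∀ z ∈ closedBall (0 : ℂ) 1, HasSum (fun k => α k * z ^ k) (w z)) (φ : ℝ) :
    HasSum (fun i => boundaryCoeff α i * exp (boundaryFreq i * φ * I))
      (w (exp (φ * I)) * conj (exp (φ * I)) + conj (w (exp (φ * I))) * exp (φ * I)) := by
  have hw := hsum (exp (φ * I)) (by simp [norm_exp_ofReal_mul_I])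
  refine HasSum.sum ((hw.mul_right (conj (exp (φ * I)))).congr_fun fun k => ?_)
    (((hw.map (starRingEnd ℂ) continuous_conj).mul_right (exp (φ * I))).congr_fun fun k => ?_)
  · rw [Function.comp_apply, boundaryCoeff, boundaryFreq, mul_assoc (α k), exp_mul_I_pow_mul_conj]
  · rw [Function.comp_apply, boundaryCoeff, boundaryFreq, Function.comp_apply, map_mul,
      mul_assoc (conj (α k)), conj_exp_mul_I_pow_mul]

/-- If `ẇ(z) = Σ_{k≥0} α_k z^k` is holomorphic on the closed unit disc
(given by a power series converging there) and satisfies the boundary condition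
`ẇ(e^{iφ})·conj(w₀(e^{iφ})) + conj(ẇ(e^{iφ}))·w₀(e^{iφ}) = 0` for all `φ`, where
`w₀(e^{iφ}) = √r · e^{iφ}` and `r > 0`, then `α_k = 0` for `k ≥ 3`,
`α₀ + conj(α₂) = 0` and `α₁ + conj(α₁) = 0`. -/
theorem bishop_disc_kernel_coefficients (r : ℝ) (hr : 0 < r)
    (α : ℕ → ℂ) (w : ℂ → ℂ)
    (hsum : ∀ z ∈ closedBall (0 : ℂ) 1, HasSum (fun k => α k * z ^ k) (w z))
    (hbd : ∀ φ : ℝ,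
      w (Complex.exp (φ * Complex.I)) *
          (starRingEnd ℂ) ((Real.sqrt r : ℂ) * Complex.exp (φ * Complex.I)) +
        (starRingEnd ℂ) (w (Complex.exp (φ * Complex.I))) *
          ((Real.sqrt r : ℂ) * Complex.exp (φ * Complex.I)) = 0) :
    (∀ k : ℕ, 3 ≤ k → α k = 0) ∧
      α 0 + (starRingEnd ℂ) (α 2) = 0 ∧ α 1 + (starRingEnd ℂ) (α 1) = 0 := by
  have hsqrt : (Real.sqrt r : ℂ) ≠ 0 := ofReal_ne_zero.mpr (Real.sqrt_pos.mpr hr).ne'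
  have hvanish (φ : ℝ) :
      HasSum (fun i => boundaryCoeff α i * exp (boundaryFreq i * φ * I)) 0 := by
    convert hasSum_boundaryCoeff_mul_exp hsum φ using 1
    refine (mul_left_cancel₀ hsqrt ?_).symm
    have h := hbd φ
    simp only [map_mul, conj_ofReal] at h
    linear_combination h
  have hα : Summable α := by simpa using (hsum 1 (by simp)).summable
  have hfiber (n : ℤ) (s : Finset (ℕ ⊕ ℕ)) (hs : ∀ i ∉ s, boundaryFreq i ≠ n) :
      ∑ i ∈ s, (if boundaryFreq i = n then boundaryCoeff α i else 0) = 0 :=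
    (hasSum_sum_of_ne_finset_zero fun i hi => if_neg (hs i hi)).unique
      (hasSum_ite_of_hasSum_exp_eq_zero (summable_norm_boundaryCoeff hα) hvanish n)
  refine ⟨fun k hk => ?_, ?_, ?_⟩
  · have h := hfiber (k - 1) {.inl k} <| by
      rintro (j | j) hj <;> simp [boundaryFreq] at hj ⊢ <;> omega
    simpa [boundaryCoeff, boundaryFreq] using h
  · have h := hfiber 1 {.inl 2, .inr 0} <| by
      rintro (j | j) hj <;> simp [boundaryFreq] at hj ⊢ <;> omega
    simp only [boundaryFreq, boundaryCoeff, Finset.mem_singleton, reduceCtorEq, not_false_eq_true,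
      Finset.sum_insert, Nat.cast_ofNat, Int.reduceSub, ↓reduceIte, Finset.sum_singleton,
      CharP.cast_eq_zero, sub_zero] at h
    simpa [add_comm] using congrArg conj h
  · have h := hfiber 0 {.inl 1, .inr 1} <| by
      rintro (j | j) hj <;> simp [boundaryFreq] at hj ⊢ <;> omega
    simpa [boundaryCoeff, boundaryFreq] using h
end
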